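/- (Algebraic core of the paper's Theorem 3.2, via Kosniowski's formula.) Let p be a prime, n, r ≥ 1, and suppose given for each i = 1,…,r nonzero elements k_1^{(i)},…,k_n^{(i)} ∈ ℤ/pℤ ∖ {0} (the weights at the fixed points) and a sign ε_i ∈ {+1, −1}, and an integer C_λ for each partition λ of weight at most n (the Chern numbers). Define in ℤ/pℤ: μ_i := ε_i · (∏_{j=1}^n k_j^{(i)})^{−1} and a_j^{(i)} := e_j(k_1^{(i)},…,k_n^{(i)}) for 1 ≤ j ≤ n, where e_j is the j-th elementary symmetric polynomial. Assume the congruences ∑_{i=1}^r μ_i · a_λ^{(i)} ≡ C_λ (mod p) hold for every partition λ of weight at most n, and that C_λ = 0 whenever the weight of λ is strictly less than n. If λ is a partition of weight n such that C_λ is not divisible by p, then r ≥ m(λ) + 1. -/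

import Mathlib

/-!
Let `N = m(λ)` be attained at the part size `j₀`, and lower the multiplicity of `j₀` to
`s ≤ N`. With `x i = a i j₀` and `v i` the rest of the `i`-th summand, Kosniowski's
congruences say that the weighted power sums `∑ i, v i * x i ^ s` equal the corresponding
Chern numbers: they vanish for `s < N` (weight `< n`) and equal `C λ ≢ 0` for `s = N`.
If `r ≤ N` this is impossible: `X ^ N` reduces modulo `∏ i, (X - x i)` to a polynomial of
degree `< r`, so the first `r` power sums determine all of them.
-/

open Polynomial Finset Function

theorem sum_mul_eval_eq_zero_of_degree_lt {R ι : Type*} [CommRing R] [Fintype ι] {v x : ι → R}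
    (h : ∀ s < Fintype.card ι, ∑ i, v i * x i ^ s = 0) {q : R[X]}
    (hq : q.degree < Fintype.card ι) : ∑ i, v i * q.eval (x i) = 0 := by
  by_cases hq0 : q = 0
  · simp [hq0]
  simp_rw [eval_eq_sum_range' ((natDegree_lt_iff_degree_lt hq0).2 hq), mul_sum]
  rw [sum_comm]
  refine sum_eq_zero fun s hs => ?_
  simp_rw [mul_left_comm (v _), ← mul_sum, h s (mem_range.1 hs), mul_zero]

theorem sum_mul_pow_eq_zero_of_forall_lt_card {R ι : Type*} [CommRing R] [Fintype ι]
    {v x : ι → R} (h : ∀ s < Fintype.card ι, ∑ i, v i * x i ^ s = 0) (s : ℕ) :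
    ∑ i, v i * x i ^ s = 0 := by
  nontriviality R
  set P : R[X] := ∏ i, (X - C (x i))
  have hP : P.Monic := monic_prod_of_monic _ _ fun i _ => monic_X_sub_C (x i)
  have hroot : ∀ i, P.eval (x i) = 0 := fun i => by
    simp only [P, eval_prod]
    exact prod_eq_zero (mem_univ i) (by simp)
  have hdeg : (X ^ s %ₘ P).degree < Fintype.card ι := by
    convert degree_modByMonic_lt (X ^ s) hP
    rw [degree_eq_natDegree hP.ne_zero, natDegree_finsetProd_X_sub_C_eq_card, card_univ]
  calc ∑ i, v i * x i ^ s = ∑ i, v i * (X ^ s %ₘ P).eval (x i) := by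
        congr! 2 with i
        exact ((eval₂_modByMonic_eq_self_of_root (hroot i)).trans (by simp)).symm
    _ = 0 := sum_mul_eval_eq_zero_of_degree_lt h hdeg

theorem prod_pow_update {ι M : Type*} [Fintype ι] [DecidableEq ι] [CommMonoid M] (f : ι → M)
    (m : ι → ℕ) (j₀ : ι) (s : ℕ) :
    ∏ j, f j ^ update m j₀ s j = f j₀ ^ s * ∏ j ∈ univ.erase j₀, f j ^ m j := by
  rw [← mul_prod_erase _ _ (mem_univ j₀), update_self]
  congr 1
  exact prod_congr rfl fun j hj => by rw [update_of_ne (ne_of_mem_erase hj)]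

/-- Index `j` stands for the part size `j + 1`. -/
def partitionWeight {n : ℕ} (m : Fin n → ℕ) : ℕ := ∑ j, (j.1 + 1) * m j

section partitionWeight

variable {n : ℕ} {m : Fin n → ℕ} {j : Fin n} {s : ℕ}

theorem partitionWeight_update_le (hs : s ≤ m j) :
    partitionWeight (update m j s) ≤ partitionWeight m :=
  sum_le_sum fun i _ => Nat.mul_le_mul_left _ <| by
    rcases eq_or_ne i j with rfl | h <;> simp [*]

theorem partitionWeight_update_lt (hs : s < m j) :
    partitionWeight (update m j s) < partitionWeight m :=
  sum_lt_sum (fun i _ => Nat.mul_le_mul_left _ <| by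
      rcases eq_or_ne i j with rfl | h <;> simp [*, hs.le])
    ⟨j, mem_univ j, by simpa using Nat.mul_lt_mul_of_pos_left hs j.1.succ_pos⟩

end partitionWeight

theorem zmod_p_action_fixed_points_lower_bound_general
    (p : ℕ) (n r : ℕ) (hn : 1 ≤ n)
    (C : (Fin n → ℕ) → ℤ)
    (μ : Fin r → ZMod p) (a : Fin r → Fin n → ZMod p)
    (hloc : ∀ m : Fin n → ℕ, (∑ j, (j.1 + 1) * m j) ≤ n →
      ∑ i, μ i * ∏ j, (a i j) ^ (m j) = (C m : ZMod p))
    (hvanish : ∀ m : Fin n → ℕ, (∑ j, (j.1 + 1) * m j) < n → C m = 0)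
    (m : Fin n → ℕ)
    (hweight : (∑ j, (j.1 + 1) * m j) = n)
    (hC : ¬ (p : ℤ) ∣ C m) :
    Finset.univ.sup m + 1 ≤ r := by
  by_contra! hrN
  obtain ⟨j₀, -, hj₀⟩ := exists_mem_eq_sup univ (univ_nonempty_iff.2 ⟨⟨0, hn⟩⟩) m
  set v : Fin r → ZMod p := fun i => μ i * ∏ j ∈ univ.erase j₀, a i j ^ m j
  have hpow : ∀ s ≤ m j₀, ∑ i, v i * a i j₀ ^ s = C (update m j₀ s) := fun s hs => by
    rw [← hloc _ ((partitionWeight_update_le hs).trans hweight.le)]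
    refine sum_congr rfl fun i _ => ?_
    rw [prod_pow_update]
    ring
  have hlow : ∀ s < Fintype.card (Fin r), ∑ i, v i * a i j₀ ^ s = 0 := fun s hs => by
    have hs' : s < m j₀ := by rw [Fintype.card_fin] at hs; omega
    rw [hpow s hs'.le, hvanish _ ((partitionWeight_update_lt hs').trans_eq hweight), Int.cast_zero]
  have hCm := sum_mul_pow_eq_zero_of_forall_lt_card hlow (m j₀)
  rw [hpow _ le_rfl, update_eq_self, ZMod.intCast_zmod_eq_zero_iff_dvd] at hCm
  exact hC hCm

/-- **algebraic core of Theorem 3.2, via Kosniowski's formula.**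
`p` is a prime; `k i j` (`j` ranging over `Fin n`) are the nonzero weights in
`ℤ/pℤ` of the `ℤ_p`-representation at the `i`-th fixed point; `ε i = ±1` is the
orientation sign; `C m` is the Chern number attached to the partition with multiplicity
vector `m : Fin n → ℕ` (index `j` stands for part size `j+1`; weight is
`∑ j, (j+1) * m j`, `m(λ) = Finset.univ.sup m`). In `ℤ/pℤ` define
`μ i = ε i * (∏ j, k i j)⁻¹` and `a i j = e_{j+1}(k i 1, …, k i n)`, where `e_{j+1}`
is the `(j+1)`-st elementary symmetric polynomial (written out as a sum over subsets of
cardinality `j+1`). Assuming Kosniowski's congruences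
`∑ i, μ i * ∏ j, (a i j)^(m j) = C m (mod p)` for all partitions of weight `≤ n`, and
that `C m = 0` for partitions of weight `< n`: if `λ` has weight `n` and `p ∤ C λ`,
then the number of fixed points satisfies `r ≥ m(λ) + 1`. -/
theorem zmod_p_action_fixed_points_lower_bound
    (p : ℕ) (hp : p.Prime) (n r : ℕ) (hn : 1 ≤ n) (hr : 1 ≤ r)
    (k : Fin r → Fin n → ZMod p)
    (hk : ∀ i j, k i j ≠ 0)
    (ε : Fin r → ℤ)
    (hε : ∀ i, ε i = 1 ∨ ε i = -1)
    (C : (Fin n → ℕ) → ℤ)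
    (μ : Fin r → ZMod p) (a : Fin r → Fin n → ZMod p)
    (hμ : ∀ i, μ i = (ε i : ZMod p) * (∏ j, k i j)⁻¹)
    (ha : ∀ i (j : Fin n), a i j =
      ∑ S ∈ Finset.univ.powersetCard (j.1 + 1), ∏ t ∈ S, k i t)
    (hloc : ∀ m : Fin n → ℕ, (∑ j, (j.1 + 1) * m j) ≤ n →
      ∑ i, μ i * ∏ j, (a i j) ^ (m j) = (C m : ZMod p))
    (hvanish : ∀ m : Fin n → ℕ, (∑ j, (j.1 + 1) * m j) < n → C m = 0)
    (m : Fin n → ℕ)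
    (hweight : (∑ j, (j.1 + 1) * m j) = n)
    (hC : ¬ (p : ℤ) ∣ C m) :
    Finset.univ.sup m + 1 ≤ r :=
  zmod_p_action_fixed_points_lower_bound_general p n r hn C μ a hloc hvanish m hweight hC
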